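/- arXiv:2501.10877 — 2 statements merged into one kernel-verified Lean document; each statement's English description precedes it below -/
import Mathlib

section
/- Let {ğ_k}_{k=1}^K be nonzero pairwise orthogonal vectors in ℝ^d obtained from vectors {g_k} by a modified Gram–Schmidt process, so that g_k = c_k ğ_k + Σ_{i<k} (⟨g_k, ğ_i⟩/⟨ğ_i, ğ_i⟩) ğ_i where c_k = d_k − Σ_{i<k} ⟨g_k, ğ_i⟩/⟨ğ_i, ğ_i⟩ for given positive scalars d_k. Let λ_k* = (1/‖ğ_k‖²)/(Σ_i 1/‖ğ_i‖²) and 𝔡 = Σ_k λ_k* ğ_k. Then ⟨g_k, 𝔡⟩ = d_k / (Σ_i 1/‖ğ_i‖²) for all k. -/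
open scoped InnerProductSpace
open Finset

/-!
Against an orthogonal family `v` of nonzero vectors, the combination
`w = ∑ j, (‖v j‖⁻² / S) • v j` with `S = ∑ i, ‖v i‖⁻²` has the same inner product `1 / S`
with every `v i`. Hence `⟪∑ i, b i • v i, w⟫ = (∑ i, b i) / S`, and for the Gram–Schmidt
decomposition of `g k` the coefficients add up to `c k + (d k - c k) = d k`.
-/

section

variable {E : Type*} [NormedAddCommGroup E] [InnerProductSpace ℝ E] {ι : Type*}

lemma inner_sum_smul_of_pairwise_inner_eq_zero [Fintype ι] {v : ι → E}
    (hv : Pairwise fun i j => ⟪v i, v j⟫_ℝ = 0) (a : ι → ℝ) (i : ι) :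
    ⟪v i, ∑ j, a j • v j⟫_ℝ = a i * ‖v i‖ ^ 2 := by
  classical
  rw [inner_sum, Finset.sum_eq_single_of_mem i (mem_univ i), real_inner_smul_right,
    real_inner_self_eq_norm_sq]
  intro j _ hji
  rw [real_inner_smul_right, hv (Ne.symm hji), mul_zero]

lemma inner_sum_inv_normSq_smul_of_pairwise_inner_eq_zero [Fintype ι] {v : ι → E}
    (hv : Pairwise fun i j => ⟪v i, v j⟫_ℝ = 0) (hv0 : ∀ i, v i ≠ 0) (S : ℝ) (i : ι) :
    ⟪v i, ∑ j, ((1 / ‖v j‖ ^ 2) / S) • v j⟫_ℝ = 1 / S := by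
  have hnorm : ‖v i‖ ^ 2 ≠ 0 := pow_ne_zero 2 (norm_ne_zero_iff.mpr (hv0 i))
  rw [inner_sum_smul_of_pairwise_inner_eq_zero hv, div_right_comm, div_mul_cancel₀ _ hnorm]

lemma sum_smul_inner_of_inner_eq_const {v : ι → E} {w : E} {t : ℝ}
    (hvw : ∀ i, ⟪v i, w⟫_ℝ = t) (s : Finset ι) (b : ι → ℝ) :
    ⟪∑ i ∈ s, b i • v i, w⟫_ℝ = (∑ i ∈ s, b i) * t := by
  simp only [sum_inner, real_inner_smul_left, hvw, Finset.sum_mul]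

end

theorem stmt2_general {dim K : ℕ} (g gt : Fin K → EuclideanSpace ℝ (Fin dim))
    (d c : Fin K → ℝ)
    (hgt : ∀ k, gt k ≠ 0)
    (horth : ∀ i j, i ≠ j → ⟪gt i, gt j⟫_ℝ = 0)
    (hc : ∀ k, c k = d k - ∑ i ∈ Finset.Iio k, ⟪g k, gt i⟫_ℝ / ⟪gt i, gt i⟫_ℝ)
    (hdecomp : ∀ k, g k =
      c k • gt k + ∑ i ∈ Finset.Iio k, (⟪g k, gt i⟫_ℝ / ⟪gt i, gt i⟫_ℝ) • gt i)
    (lamStar : Fin K → ℝ)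
    (hlamStar : ∀ k, lamStar k = (1 / ‖gt k‖ ^ 2) / (∑ i, 1 / ‖gt i‖ ^ 2)) :
    ∀ k, ⟪g k, ∑ j, lamStar j • gt j⟫_ℝ = d k / (∑ i, 1 / ‖gt i‖ ^ 2) := by
  intro k
  set S := ∑ i, 1 / ‖gt i‖ ^ 2
  have hdir : ∀ i, ⟪gt i, ∑ j, lamStar j • gt j⟫_ℝ = 1 / S := by
    simp only [hlamStar]
    exact inner_sum_inv_normSq_smul_of_pairwise_inner_eq_zero horth hgt S
  rw [hdecomp k, inner_add_left, real_inner_smul_left, hdir,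
    sum_smul_inner_of_inner_eq_const hdir, hc k]
  ring

/-- With the modified Gram–Schmidt decomposition
`g k = c k • ğ k + ∑_{i<k} (⟪g k, ğ i⟫/⟪ğ i, ğ i⟫) • ğ i` where
`c k = d k − ∑_{i<k} ⟪g k, ğ i⟫/⟪ğ i, ğ i⟫`, the direction
`𝔡 = ∑ λ_k* • ğ k` satisfies `⟪g k, 𝔡⟫ = d k / (∑ i, 1/‖ğ i‖²)`. -/
theorem stmt2 {dim K : ℕ} (g gt : Fin K → EuclideanSpace ℝ (Fin dim))
    (d c : Fin K → ℝ) (hd : ∀ k, 0 < d k)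
    (hgt : ∀ k, gt k ≠ 0)
    (horth : ∀ i j, i ≠ j → ⟪gt i, gt j⟫_ℝ = 0)
    (hc : ∀ k, c k = d k - ∑ i ∈ Finset.Iio k, ⟪g k, gt i⟫_ℝ / ⟪gt i, gt i⟫_ℝ)
    (hcne : ∀ k, c k ≠ 0)
    (hdecomp : ∀ k, g k =
      c k • gt k + ∑ i ∈ Finset.Iio k, (⟪g k, gt i⟫_ℝ / ⟪gt i, gt i⟫_ℝ) • gt i)
    (lamStar : Fin K → ℝ)
    (hlamStar : ∀ k, lamStar k = (1 / ‖gt k‖ ^ 2) / (∑ i, 1 / ‖gt i‖ ^ 2)) :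
    ∀ k, ⟪g k, ∑ j, lamStar j • gt j⟫_ℝ = d k / (∑ i, 1 / ‖gt i‖ ^ 2) :=
  stmt2_general g gt d c hgt horth hc hdecomp lamStar hlamStar
end

section
/- Let f₁,...,f_K: ℝ^d → ℝ be L-smooth, let {ğ_k} be nonzero pairwise orthogonal vectors with ⟨∇f_k(θ), 𝔡⟩ = d_k / S where S = Σ_i 1/‖ğ_i‖², 𝔡 = Σ_k λ_k* ğ_k with λ_k* = (1/‖ğ_k‖²)/S, and all d_k > 0. If the step size η = S satisfies η ≤ (2/L)·min_k d_k, then f_k(θ − η𝔡) ≤ f_k(θ) for all k ∈ [K]. -/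
/-!
Since `𝔡` is a weighted sum of pairwise orthogonal vectors with weights `λ_k = ‖ğ_k‖⁻² / S`,
Pythagoras gives `‖𝔡‖² = ∑ λ_k² ‖ğ_k‖² = 1/S`. The descent lemma for an `L`-smooth `f_k` along
the step `-S • 𝔡` then bounds the change of `f_k` by `-S ⟪∇f_k(θ), 𝔡⟫ + (L/2) S² ‖𝔡‖²
= -d_k + L S / 2`, which is nonpositive exactly when `S ≤ (2/L) d_k`.
-/

open scoped InnerProductSpace
open Finset

section Descent

variable {F : Type*} [NormedAddCommGroup F] [InnerProductSpace ℝ F] [CompleteSpace F]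

theorem hasDerivAt_comp_add_smul {f : F → ℝ} (hf : Differentiable ℝ f) (x v : F) (t : ℝ) :
    HasDerivAt (fun s : ℝ => f (x + s • v)) ⟪gradient f (x + t • v), v⟫_ℝ t := by
  have hline : HasDerivAt (fun s : ℝ => x + s • v) v t := by
    simpa using ((hasDerivAt_id t).smul_const v).const_add x
  have h := (hf (x + t • v)).hasGradientAt.hasFDerivAt.comp_hasDerivAt t hline
  exact (h : HasDerivAt (fun s : ℝ => f (x + s • v)) _ t).congr_deriv (by simp)

theorem le_add_inner_gradient_add_sq_norm {f : F → ℝ} (hf : Differentiable ℝ f) {L : ℝ}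
    (hsmooth : ∀ x y, ‖gradient f x - gradient f y‖ ≤ L * ‖x - y‖) (x v : F) :
    f (x + v) ≤ f x + ⟪gradient f x, v⟫_ℝ + L / 2 * ‖v‖ ^ 2 := by
  have hderiv := hasDerivAt_comp_add_smul hf x v
  have hB : ∀ t : ℝ,
      HasDerivAt (fun s : ℝ => f x + s * ⟪gradient f x, v⟫_ℝ + L / 2 * s ^ 2 * ‖v‖ ^ 2)
        (⟪gradient f x, v⟫_ℝ + L * t * ‖v‖ ^ 2) t := by
    intro t
    have := (((hasDerivAt_id t).mul_const ⟪gradient f x, v⟫_ℝ).const_add (f x)).add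
      (((hasDerivAt_pow 2 t).const_mul (L / 2)).mul_const (‖v‖ ^ 2))
    refine this.congr_deriv ?_
    ring
  have hbound : ∀ t ∈ Set.Ico (0 : ℝ) 1,
      ⟪gradient f (x + t • v), v⟫_ℝ ≤ ⟪gradient f x, v⟫_ℝ + L * t * ‖v‖ ^ 2 := by
    rintro t ⟨ht, -⟩
    have hdiff : ⟪gradient f (x + t • v) - gradient f x, v⟫_ℝ ≤ L * t * ‖v‖ ^ 2 := calc
      _ ≤ ‖gradient f (x + t • v) - gradient f x‖ * ‖v‖ := real_inner_le_norm _ _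
      _ ≤ (L * ‖(x + t • v) - x‖) * ‖v‖ := by gcongr; exact hsmooth _ _
      _ = L * t * ‖v‖ ^ 2 := by
        rw [add_sub_cancel_left, norm_smul, Real.norm_of_nonneg ht]; ring
    rw [inner_sub_left] at hdiff
    linarith
  have h := image_le_of_deriv_right_le_deriv_boundary
    (fun t _ => (hderiv t).continuousAt.continuousWithinAt)
    (fun t _ => (hderiv t).hasDerivWithinAt) (by simp)
    (fun t _ => (hB t).continuousAt.continuousWithinAt)
    (fun t _ => (hB t).hasDerivWithinAt) hbound (Set.right_mem_Icc.2 zero_le_one)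
  simpa using h

end Descent

section Orthogonal

variable {ι F : Type*} [Fintype ι] [NormedAddCommGroup F] [InnerProductSpace ℝ F]

theorem norm_sum_smul_sq_of_pairwise_inner_eq_zero {g : ι → F}
    (horth : ∀ i j, i ≠ j → ⟪g i, g j⟫_ℝ = 0) (c : ι → ℝ) :
    ‖∑ i, c i • g i‖ ^ 2 = ∑ i, c i ^ 2 * ‖g i‖ ^ 2 := by
  classical
  rw [← real_inner_self_eq_norm_sq, sum_inner]
  refine sum_congr rfl fun i _ => ?_
  rw [inner_sum, sum_eq_single i (fun j _ hji => by
      rw [real_inner_smul_left, real_inner_smul_right, horth i j hji.symm]; ring)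
    (by simp), real_inner_smul_left, real_inner_smul_right, real_inner_self_eq_norm_sq]
  ring

/-- The minimum-norm convex combination of orthogonal vectors has squared norm `1 / S`. -/
theorem norm_sq_sum_inv_norm_sq_smul {g : ι → F} (horth : ∀ i j, i ≠ j → ⟪g i, g j⟫_ℝ = 0)
    {S : ℝ} (hS : S = ∑ i, 1 / ‖g i‖ ^ 2) :
    ‖∑ i, ((1 / ‖g i‖ ^ 2) / S) • g i‖ ^ 2 = 1 / S := by
  rw [norm_sum_smul_sq_of_pairwise_inner_eq_zero horth]
  have hterm : ∀ i, ((1 / ‖g i‖ ^ 2) / S) ^ 2 * ‖g i‖ ^ 2 = (1 / ‖g i‖ ^ 2) / S ^ 2 := by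
    intro i
    rcases eq_or_ne ‖g i‖ 0 with h | h
    · simp [h]
    · field_simp
  rw [sum_congr rfl fun i _ => hterm i, ← sum_div, ← hS]
  rcases eq_or_ne S 0 with h | h
  · simp [h]
  · field_simp

end Orthogonal

theorem stmt4_general {d K : ℕ} [NeZero K] (f : Fin K → (EuclideanSpace ℝ (Fin d) → ℝ))
    (L : ℝ) (hL : 0 < L)
    (hf : ∀ k, Differentiable ℝ (f k))
    (hsmooth : ∀ k x y, ‖gradient (f k) x - gradient (f k) y‖ ≤ L * ‖x - y‖)
    (gt : Fin K → EuclideanSpace ℝ (Fin d))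
    (horth : ∀ i j, i ≠ j → ⟪gt i, gt j⟫_ℝ = 0)
    (dk : Fin K → ℝ)
    (S : ℝ) (hS : S = ∑ i, 1 / ‖gt i‖ ^ 2)
    (lamStar : Fin K → ℝ)
    (hlamStar : ∀ k, lamStar k = (1 / ‖gt k‖ ^ 2) / S)
    (𝔡 : EuclideanSpace ℝ (Fin d)) (h𝔡 : 𝔡 = ∑ k, lamStar k • gt k)
    (θ : EuclideanSpace ℝ (Fin d))
    (hdir : ∀ k, ⟪gradient (f k) θ, 𝔡⟫_ℝ = dk k / S)
    (η : ℝ) (hη : η = S)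
    (hstep : η ≤ (2 / L) * (Finset.univ.inf' Finset.univ_nonempty dk)) :
    ∀ k, f k (θ - η • 𝔡) ≤ f k θ := by
  intro k
  subst η
  rcases eq_or_ne S 0 with hS0 | hS0
  · simp [hS0]
  have hnorm : ‖𝔡‖ ^ 2 = 1 / S := by
    rw [h𝔡, funext hlamStar]
    exact norm_sq_sum_inv_norm_sq_smul horth hS
  have hmin : L * S / 2 ≤ dk k := calc
    L * S / 2 ≤ L * (2 / L * dk k) / 2 := by
      gcongr; exact hstep.trans (by gcongr; exact inf'_le dk (mem_univ k))
    _ = dk k := by field_simp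
  have hdesc := le_add_inner_gradient_add_sq_norm (hf k) (hsmooth k) θ (-(S • 𝔡))
  rw [← sub_eq_add_neg, inner_neg_right, real_inner_smul_right, hdir k, norm_neg, norm_smul,
    mul_pow, hnorm, Real.norm_eq_abs, sq_abs] at hdesc
  calc f k (θ - S • 𝔡) ≤ f k θ + -(S * (dk k / S)) + L / 2 * (S ^ 2 * (1 / S)) := hdesc
    _ = f k θ - dk k + L * S / 2 := by field_simp; ring
    _ ≤ f k θ := by linarith

/-- With `S = ∑ i, 1/‖ğ i‖²`, `𝔡 = ∑ λ_k* • ğ k`,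
`⟪∇f_k(θ), 𝔡⟫ = d k / S` and `d k > 0`, if the step size `η = S` satisfies
`η ≤ (2/L) * min_k d k`, then `f k (θ − η • 𝔡) ≤ f k θ` for all `k`. -/
theorem stmt4 {d K : ℕ} [NeZero K] (f : Fin K → (EuclideanSpace ℝ (Fin d) → ℝ))
    (L : ℝ) (hL : 0 < L)
    (hf : ∀ k, Differentiable ℝ (f k))
    (hsmooth : ∀ k x y, ‖gradient (f k) x - gradient (f k) y‖ ≤ L * ‖x - y‖)
    (gt : Fin K → EuclideanSpace ℝ (Fin d))
    (hgt : ∀ k, gt k ≠ 0)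
    (horth : ∀ i j, i ≠ j → ⟪gt i, gt j⟫_ℝ = 0)
    (dk : Fin K → ℝ) (hdk : ∀ k, 0 < dk k)
    (S : ℝ) (hS : S = ∑ i, 1 / ‖gt i‖ ^ 2)
    (lamStar : Fin K → ℝ)
    (hlamStar : ∀ k, lamStar k = (1 / ‖gt k‖ ^ 2) / S)
    (𝔡 : EuclideanSpace ℝ (Fin d)) (h𝔡 : 𝔡 = ∑ k, lamStar k • gt k)
    (θ : EuclideanSpace ℝ (Fin d))
    (hdir : ∀ k, ⟪gradient (f k) θ, 𝔡⟫_ℝ = dk k / S)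
    (η : ℝ) (hη : η = S)
    (hstep : η ≤ (2 / L) * (Finset.univ.inf' Finset.univ_nonempty dk)) :
    ∀ k, f k (θ - η • 𝔡) ≤ f k θ :=
  stmt4_general f L hL hf hsmooth gt horth dk S hS lamStar hlamStar 𝔡 h𝔡 θ hdir η hη hstep
end
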